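/- Let X be a finite set, let k ≥ 1, and let H be a finite family of subsets of X, each of cardinality at least k. If |H| < 2^{k−1}, then there exists a 2-coloring c : X → {0, 1} such that no member of H is monochromatic, i.e., every A ∈ H contains both an element colored 0 and an element colored 1. -/

import Mathlib

/-!
Of the `q ^ #X` colorings `X → β` (with `q = #β`), at most `q * q ^ #Aᶜ` are monochromatic on a
fixed set `A`; this is the counting form of "a random coloring makes `A` monochromatic with
probability `q ^ (1 - #A)`". If every member of `H` has at least `k` elements and `#H * q < q ^ k`,
the union bound leaves fewer than `q ^ #X` bad colorings, so some coloring is good.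
-/

open Finset

namespace Coloring

variable {X β : Type*}

def IsMonochromatic (c : X → β) (A : Finset X) : Prop :=
  ∃ v, ∀ x ∈ A, c x = v

theorem not_isMonochromatic_iff {c : X → β} {A : Finset X} :
    ¬IsMonochromatic c A ↔ ∀ v, ∃ x ∈ A, c x ≠ v := by
  simp [IsMonochromatic]

variable [Fintype X] [DecidableEq X] [Fintype β] [DecidableEq β]

instance (c : X → β) (A : Finset X) : Decidable (IsMonochromatic c A) :=
  inferInstanceAs (Decidable (∃ v, ∀ x ∈ A, c x = v))

theorem card_forall_mem_eq (A : Finset X) (v : β) :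
    #{c : X → β | ∀ x ∈ A, c x = v} = Fintype.card β ^ #Aᶜ := by
  have : ({c | ∀ x ∈ A, c x = v} : Finset (X → β)) =
      Fintype.piFinset fun x => if x ∈ A then {v} else univ := by
    ext c
    simp only [mem_filter, mem_univ, true_and, Fintype.mem_piFinset]
    refine forall_congr' fun x => ?_
    split_ifs <;> simp_all
  rw [this, Fintype.card_piFinset]
  simp only [apply_ite, card_singleton, card_univ, prod_ite, prod_const_one, one_mul, prod_const]
  congr 2; ext; simp

theorem card_isMonochromatic_le (A : Finset X) :
    #{c : X → β | IsMonochromatic c A} ≤ Fintype.card β * Fintype.card β ^ #Aᶜ :=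
  calc #{c : X → β | IsMonochromatic c A}
      = #(univ.biUnion fun v => ({c | ∀ x ∈ A, c x = v} : Finset (X → β))) := by
        congr 1; ext c; rw [mem_filter, mem_biUnion]; simp [IsMonochromatic]
    _ ≤ ∑ v : β, #{c : X → β | ∀ x ∈ A, c x = v} := card_biUnion_le
    _ = Fintype.card β * Fintype.card β ^ #Aᶜ := by simp [card_forall_mem_eq]

theorem exists_forall_not_isMonochromatic [Nonempty β] {H : Finset (Finset X)} {k : ℕ}
    (hsize : ∀ A ∈ H, k ≤ #A) (hH : #H * Fintype.card β < Fintype.card β ^ k) :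
    ∃ c : X → β, ∀ A ∈ H, ¬IsMonochromatic c A := by
  set q := Fintype.card β
  set n := Fintype.card X
  set bad := H.biUnion fun A => {c : X → β | IsMonochromatic c A}
  have hq : 1 ≤ q := Fintype.card_pos
  have hbad : q ^ k * #bad < q ^ k * q ^ n :=
    calc q ^ k * #bad
        ≤ ∑ A ∈ H, q ^ k * #{c : X → β | IsMonochromatic c A} := by
          rw [← mul_sum]; exact Nat.mul_le_mul_left _ card_biUnion_le
      _ ≤ ∑ A ∈ H, q * (q ^ #A * q ^ #Aᶜ) := by
          refine sum_le_sum fun A hA => ?_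
          calc q ^ k * #{c : X → β | IsMonochromatic c A}
              ≤ q ^ #A * (q * q ^ #Aᶜ) :=
                Nat.mul_le_mul (pow_le_pow_right₀ hq (hsize A hA)) (card_isMonochromatic_le A)
            _ = q * (q ^ #A * q ^ #Aᶜ) := by ring
      _ = #H * q * q ^ n := by
          simp_rw [← pow_add, card_add_card_compl, sum_const, smul_eq_mul, mul_assoc, n]
      _ < q ^ k * q ^ n := Nat.mul_lt_mul_of_pos_right hH (by positivity)
  have hlt : #bad < #(univ : Finset (X → β)) := by
    rw [card_univ, Fintype.card_fun]
    exact Nat.lt_of_mul_lt_mul_left hbad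
  obtain ⟨c, -, hc⟩ := exists_mem_notMem_of_card_lt_card hlt
  exact ⟨c, fun A hA hmono => hc (mem_biUnion.2 ⟨A, hA, by simpa using hmono⟩)⟩

end Coloring

open Coloring

theorem propertyB_of_small_family_general {X : Type*} [Fintype X]
    (k : ℕ) (H : Finset (Finset X))
    (hsize : ∀ A ∈ H, k ≤ A.card)
    (hcard : H.card < 2 ^ (k - 1)) :
    ∃ c : X → Fin 2, ∀ A ∈ H, (∃ x ∈ A, c x = 0) ∧ (∃ x ∈ A, c x = 1) := by
  classical
  have hH : #H * Fintype.card (Fin 2) < Fintype.card (Fin 2) ^ k := by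
    -- `k - 1` truncates at `k = 0`, where `hcard` forces `H = ∅`.
    rcases k with _ | k
    · simp_all
    · rw [Fintype.card_fin, pow_succ]
      simpa using hcard
  obtain ⟨c, hc⟩ := exists_forall_not_isMonochromatic hsize hH
  refine ⟨c, fun A hA => ?_⟩
  obtain ⟨x, hx, hx1⟩ := not_isMonochromatic_iff.1 (hc A hA) 1
  obtain ⟨y, hy, hy0⟩ := not_isMonochromatic_iff.1 (hc A hA) 0
  exact ⟨⟨x, hx, by omega⟩, ⟨y, hy, by omega⟩⟩

/-- Erdős's bound for Property B: a family of fewer than `2^(k−1)` sets, each of size at least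
`k`, admits a 2-coloring of the ground set with no monochromatic set. -/
theorem propertyB_of_small_family {X : Type*} [Fintype X] [DecidableEq X]
    (k : ℕ) (hk : 1 ≤ k) (H : Finset (Finset X))
    (hsize : ∀ A ∈ H, k ≤ A.card)
    (hcard : H.card < 2 ^ (k - 1)) :
    ∃ c : X → Fin 2, ∀ A ∈ H, (∃ x ∈ A, c x = 0) ∧ (∃ x ∈ A, c x = 1) :=
  propertyB_of_small_family_general k H hsize hcard
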